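/- Every minimum dominating set D of the tree G_k contains exactly one vertex of {r, s} and, for each i with 1 ≤ i ≤ k, exactly two vertices of {y_i, x_i, w_i, v_i, u_i}. -/

import Mathlib

/-- A set `D` of vertices is a dominating set if every vertex either lies in `D`
or is adjacent to a vertex of `D`. -/
def IsDominatingSet {V : Type*} (G : SimpleGraph V) (D : Finset V) : Prop :=
  ∀ v : V, v ∈ D ∨ ∃ w ∈ D, G.Adj v w

/-- The domination number: the minimum size of a dominating set. -/
noncomputable def dominationNumber {V : Type*} [Fintype V] (G : SimpleGraph V) : ℕ :=
  sInf {n | ∃ D : Finset V, IsDominatingSet G D ∧ D.card = n}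

/-- The number of minimum dominating sets. -/
noncomputable def numMinDomSets {V : Type*} [Fintype V] (G : SimpleGraph V) : ℕ :=
  Set.ncard {D : Finset V | IsDominatingSet G D ∧ D.card = dominationNumber G}

/-- The tree `G_k`: vertices `r = inl 0`, `s = inl 1`, and for each `i : Fin k` a path
`y_i x_i w_i v_i u_i = inr (i, 0), …, inr (i, 4)`; edges `r s`, `s y_i`, and the path edges. -/
def Gk (k : ℕ) : SimpleGraph (Fin 2 ⊕ (Fin k × Fin 5)) :=
  SimpleGraph.fromRel (fun a b =>
    (a = Sum.inl 0 ∧ b = Sum.inl 1) ∨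
    (∃ i : Fin k, a = Sum.inl 1 ∧ b = Sum.inr (i, 0)) ∨
    (∃ (i : Fin k) (j : Fin 4), a = Sum.inr (i, j.castSucc) ∧ b = Sum.inr (i, j.succ)))

/-!
Group the vertices into blocks: `{r, s}` and the `k` paths. The closed neighbourhood of `r`
lies in `{r, s}`, and on the `i`-th path the closed neighbourhoods of `x_i` and `u_i` are
disjoint, so every dominating set has at least one vertex in `{r, s}` and two on each path,
`2k + 1` in all. The set `{s} ∪ {x_i, v_i}` dominates with exactly `2k + 1` vertices, so a
minimum dominating set attains every one of these block bounds.
-/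

theorem IsDominatingSet.exists_mem_of_adj {V : Type*} {G : SimpleGraph V} {D : Finset V}
    (hD : IsDominatingSet G D) {S : Set V} {v : V} (hv : v ∈ S)
    (hS : ∀ w, G.Adj v w → w ∈ S) : ∃ w ∈ D, w ∈ S := by
  rcases hD v with h | ⟨w, hw, hvw⟩
  exacts [⟨v, h, hv⟩, ⟨w, hw, hS w hvw⟩]

namespace Gk

variable {k : ℕ}

theorem adj_inl_zero {w : Fin 2 ⊕ (Fin k × Fin 5)} (h : (Gk k).Adj (.inl 0) w) :
    w = .inl 1 := by
  rw [Gk, SimpleGraph.fromRel_adj] at h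
  obtain ⟨-, h | h⟩ := h <;>
    rcases h with ⟨h1, h2⟩ | ⟨i, h1, h2⟩ | ⟨i, j, h1, h2⟩ <;> simp_all

theorem adj_inr {i : Fin k} {j : Fin 5} {w : Fin 2 ⊕ (Fin k × Fin 5)}
    (h : (Gk k).Adj (.inr (i, j)) w) :
    (j = 0 ∧ w = .inl 1) ∨
      ∃ j' : Fin 5, w = .inr (i, j') ∧ ((j' : ℕ) + 1 = j ∨ (j : ℕ) + 1 = j') := by
  rw [Gk, SimpleGraph.fromRel_adj] at h
  obtain ⟨-, h | h⟩ := h <;>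
    rcases h with ⟨h1, h2⟩ | ⟨i', h1, h2⟩ | ⟨i', j', h1, h2⟩ <;> simp_all

theorem adj_path (i : Fin k) (j : Fin 4) :
    (Gk k).Adj (.inr (i, j.castSucc)) (.inr (i, j.succ)) := by
  rw [Gk, SimpleGraph.fromRel_adj]
  exact ⟨by simp [Fin.ext_iff], .inl (.inr (.inr ⟨i, j, rfl, rfl⟩))⟩

theorem adj_inl_zero_inl_one : (Gk k).Adj (.inl 0) (.inl 1) := by
  rw [Gk, SimpleGraph.fromRel_adj]
  exact ⟨by simp, .inl (.inl ⟨rfl, rfl⟩)⟩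

/-- `{s} ∪ {x_i, v_i | i < k}`. -/
def stdDomSet (k : ℕ) : Finset (Fin 2 ⊕ (Fin k × Fin 5)) :=
  insert (.inl 1) ((Finset.univ ×ˢ {1, 3}).map .inr)

theorem card_stdDomSet : (stdDomSet k).card = 2 * k + 1 := by
  rw [stdDomSet, Finset.card_insert_of_notMem (by simp), Finset.card_map, Finset.card_product]
  simp [mul_comm]

theorem isDominatingSet_stdDomSet : IsDominatingSet (Gk k) (stdDomSet k) := by
  rintro (v | ⟨i, j⟩)
  · fin_cases v
    · exact .inr ⟨.inl 1, by simp [stdDomSet], adj_inl_zero_inl_one⟩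
    · exact .inl (by simp [stdDomSet])
  · have hx : .inr (i, 1) ∈ stdDomSet k := by simp [stdDomSet]
    have hv : .inr (i, 3) ∈ stdDomSet k := by simp [stdDomSet]
    fin_cases j
    · exact .inr ⟨_, hx, adj_path i 0⟩
    · exact .inl hx
    · exact .inr ⟨_, hx, (adj_path i 1).symm⟩
    · exact .inl hv
    · exact .inr ⟨_, hv, (adj_path i 3).symm⟩

theorem dominationNumber_le : dominationNumber (Gk k) ≤ 2 * k + 1 :=
  Nat.sInf_le ⟨_, isDominatingSet_stdDomSet, card_stdDomSet⟩

/-- `none` is the block `{r, s}`, `some i` the `i`-th path. -/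
def block : Fin 2 ⊕ (Fin k × Fin 5) → Option (Fin k) :=
  Sum.elim (fun _ => none) (fun p => some p.1)

def blockBound : Option (Fin k) → ℕ
  | none => 1
  | some _ => 2

theorem sum_blockBound : ∑ b : Option (Fin k), blockBound b = 2 * k + 1 := by
  simp only [Fintype.sum_option, blockBound, Finset.sum_const, Finset.card_univ,
    Fintype.card_fin, smul_eq_mul]
  ring

theorem blockBound_le_card_filter_block {D : Finset (Fin 2 ⊕ (Fin k × Fin 5))}
    (hD : IsDominatingSet (Gk k) D) (b : Option (Fin k)) :
    blockBound b ≤ (D.filter (block · = b)).card := by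
  cases b with
  | none =>
    obtain ⟨w, hwD, hw⟩ := hD.exists_mem_of_adj (S := {w | block w = none}) (v := .inl 0) rfl
      fun w h => by simp [adj_inl_zero h, block]
    exact Finset.card_pos.2 ⟨w, Finset.mem_filter.2 ⟨hwD, hw⟩⟩
  | some i =>
    obtain ⟨_, hxD, j, rfl, hj⟩ := hD.exists_mem_of_adj
      (S := {w | ∃ j : Fin 5, w = .inr (i, j) ∧ (j : ℕ) ≤ 2}) (v := .inr (i, 1))
      ⟨1, rfl, by decide⟩ fun w h => by
        rcases adj_inr h with ⟨h1, -⟩ | ⟨j', rfl, hj'⟩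
        · simp at h1
        · exact ⟨j', rfl, by omega⟩
    obtain ⟨_, huD, j', rfl, hj'⟩ := hD.exists_mem_of_adj
      (S := {w | ∃ j : Fin 5, w = .inr (i, j) ∧ 3 ≤ (j : ℕ)}) (v := .inr (i, 4))
      ⟨4, rfl, by decide⟩ fun w h => by
        rcases adj_inr h with ⟨h1, -⟩ | ⟨j', rfl, hj'⟩
        · simp at h1
        · exact ⟨j', rfl, by omega⟩
    refine Finset.one_lt_card.2
      ⟨_, Finset.mem_filter.2 ⟨hxD, rfl⟩, _, Finset.mem_filter.2 ⟨huD, rfl⟩, ?_⟩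
    simp only [ne_eq, Sum.inr.injEq, Prod.mk.injEq, true_and]
    omega

theorem card_filter_block_of_card_eq_dominationNumber {D : Finset (Fin 2 ⊕ (Fin k × Fin 5))}
    (hD : IsDominatingSet (Gk k) D) (hcard : D.card = dominationNumber (Gk k))
    (b : Option (Fin k)) : (D.filter (block · = b)).card = blockBound b := by
  have hle b (_ : b ∈ Finset.univ) := blockBound_le_card_filter_block hD b
  have hsum : ∑ b, (D.filter (block · = b)).card ≤ ∑ b : Option (Fin k), blockBound b := by
    rw [← Finset.card_eq_sum_card_fiberwise (by simp), sum_blockBound, hcard]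
    exact dominationNumber_le
  exact ((Finset.sum_eq_sum_iff_of_le hle).1 ((Finset.sum_le_sum hle).antisymm hsum) b
    (Finset.mem_univ b)).symm

theorem block_eq_none_iff {a : Fin 2 ⊕ (Fin k × Fin 5)} :
    block a = none ↔ a = .inl 0 ∨ a = .inl 1 := by
  rcases a with v | ⟨i, j⟩
  · fin_cases v <;> simp [block]
  · simp [block]

theorem block_eq_some_iff {a : Fin 2 ⊕ (Fin k × Fin 5)} {i : Fin k} :
    block a = some i ↔ ∃ j : Fin 5, a = .inr (i, j) := by
  rcases a with v | ⟨i', j⟩ <;> simp [block, eq_comm]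

end Gk

/-- Every minimum dominating set of `G_k` contains exactly one vertex of `{r, s}`
and exactly two vertices of each path `{y_i, x_i, w_i, v_i, u_i}`. -/
theorem Gk_minDomSet_structure (k : ℕ) (D : Finset (Fin 2 ⊕ (Fin k × Fin 5)))
    (hD : IsDominatingSet (Gk k) D) (hcard : D.card = dominationNumber (Gk k)) :
    (D.filter (fun a => a = Sum.inl 0 ∨ a = Sum.inl 1)).card = 1 ∧
    ∀ i : Fin k, (D.filter (fun a => ∃ j : Fin 5, a = Sum.inr (i, j))).card = 2 := by
  have hblock := Gk.card_filter_block_of_card_eq_dominationNumber hD hcard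
  constructor
  · simpa only [Gk.block_eq_none_iff, Gk.blockBound] using hblock none
  · intro i
    simpa only [Gk.block_eq_some_iff, Gk.blockBound] using hblock (some i)
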